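/- A Hausdorff topological group G is ω-narrow and a strong q-space if and only if for each open neighborhood O of the identity in G there is a closed sequentially compact invariant (normal) subgroup H, having a countable base {V_n : n ∈ ω} of open neighborhoods of H in G such that H ⊆ O and {V_n : n ∈ ω} is a strong q-sequence at each point y ∈ H, such that the canonical quotient mapping p : G → G/H is strongly sequential-perfect and the quotient space G/H is separable and metrizable. -/

import Mathlib

open Filter Topology Set Pointwise TopologicalSpace

universe u

section Defs

variable {X : Type*}

/-- A subset `s` of a topological space is countably compact (in the ambient space) if every
countable open cover of `s` (indexed by `ℕ`) has a finite subcover. -/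
def IsCountablyCompactIn [TopologicalSpace X] (s : Set X) : Prop :=
  ∀ U : ℕ → Set X, (∀ n, IsOpen (U n)) → s ⊆ ⋃ n, U n → ∃ t : Finset ℕ, s ⊆ ⋃ n ∈ t, U n

/-- `U` is a q-sequence at `x`: a sequence of open neighbourhoods of `x` such that every
sequence of points chosen from the `U n` has an accumulation (cluster) point in `X`. -/
def IsQSequenceAt [TopologicalSpace X] (x : X) (U : ℕ → Set X) : Prop :=
  (∀ n, IsOpen (U n) ∧ x ∈ U n) ∧
    ∀ u : ℕ → X, (∀ n, u n ∈ U n) → ∃ p : X, MapClusterPt p Filter.atTop u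

/-- A space is a q-space if every point has a q-sequence. -/
def QSpace (X : Type*) [TopologicalSpace X] : Prop :=
  ∀ x : X, ∃ U : ℕ → Set X, IsQSequenceAt x U

/-- A space is a strict q-space if every point has a q-sequence whose intersection is
sequentially compact. -/
def StrictQSpace (X : Type*) [TopologicalSpace X] : Prop :=
  ∀ x : X, ∃ U : ℕ → Set X, IsQSequenceAt x U ∧ IsSeqCompact (⋂ n, U n)

/-- `U` is a strong q-sequence at `x`: a sequence of open neighbourhoods of `x` such that every
sequence of points chosen from the `U n` has a convergent subsequence. -/
def IsStrongQSequenceAt [TopologicalSpace X] (x : X) (U : ℕ → Set X) : Prop :=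
  (∀ n, IsOpen (U n) ∧ x ∈ U n) ∧
    ∀ u : ℕ → X, (∀ n, u n ∈ U n) →
      ∃ (p : X) (φ : ℕ → ℕ), StrictMono φ ∧ Filter.Tendsto (u ∘ φ) Filter.atTop (nhds p)

/-- A space is a strong q-space if every point has a strong q-sequence. -/
def StrongQSpace (X : Type*) [TopologicalSpace X] : Prop :=
  ∀ x : X, ∃ U : ℕ → Set X, IsStrongQSequenceAt x U

/-- A subset `A` is of countable character in `X` if there is a countable family of open
neighbourhoods of `A` such that every open neighbourhood of `A` contains a member of it. -/
def HasCountableCharacter [TopologicalSpace X] (A : Set X) : Prop :=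
  ∃ U : ℕ → Set X, (∀ n, IsOpen (U n) ∧ A ⊆ U n) ∧
    ∀ W : Set X, IsOpen W → A ⊆ W → ∃ n, U n ⊆ W

/-- A topological group is ω-balanced if for every neighbourhood `U` of the identity there is
a countable family `γ` of open neighbourhoods of the identity such that for every `x` some
`V ∈ γ` satisfies `xVx⁻¹ ⊆ U`. -/
def OmegaBalanced (G : Type*) [Group G] [TopologicalSpace G] : Prop :=
  ∀ U : Set G, U ∈ nhds (1 : G) → ∃ γ : Set (Set G), γ.Countable ∧
    (∀ V ∈ γ, IsOpen V ∧ (1 : G) ∈ V) ∧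
    ∀ x : G, ∃ V ∈ γ, ∀ v ∈ V, x * v * x⁻¹ ∈ U

/-- A topological group is ω-narrow if for every open neighbourhood `V` of the identity there
is a countable set `A` with `A * V = G`. -/
def OmegaNarrow (G : Type*) [Group G] [TopologicalSpace G] : Prop :=
  ∀ V : Set G, IsOpen V → (1 : G) ∈ V → ∃ A : Set G, A.Countable ∧ A * V = Set.univ

/-- A topological group is feathered if it has a nonempty compact subset of countable
character. -/
def IsFeathered (G : Type*) [Group G] [TopologicalSpace G] : Prop :=
  ∃ K : Set G, K.Nonempty ∧ IsCompact K ∧ HasCountableCharacter K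

/-- A subgroup `H` of a topological group is neutral if for every open neighbourhood `U` of the
identity there is an open neighbourhood `V` of the identity with `HV ⊆ UH`. -/
def IsNeutralSubgroup {G : Type*} [Group G] [TopologicalSpace G] (H : Subgroup G) : Prop :=
  ∀ U : Set G, IsOpen U → (1 : G) ∈ U →
    ∃ V : Set G, IsOpen V ∧ (1 : G) ∈ V ∧ (H : Set G) * V ⊆ U * (H : Set G)

end Defs

/-!
Fix a strong q-sequence `U` at `1` and an open `O ∋ 1`. Since `G` is ω-narrow, every
neighbourhood `S` of `1` has countably many neighbourhoods `E k` of `1` such that each `x`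
satisfies `x (E k) x⁻¹ ⊆ S` for some `k`. Diagonalising over these families yields symmetric open
neighbourhoods `W n ⊆ O ∩ U n` with `W (n+1)² ⊆ W n` and, for all `n` and `x`, some `m` with
`x (W m) x⁻¹ ⊆ W n`; hence `H = ⋂ W n` is a closed normal subgroup. As the `W n` shrink a strong
q-sequence, every sequence with `u n ∈ W n H` has a subsequence converging to a point of `H`.
This one property makes `H` sequentially compact with base `W n H`, gives the strong q-property
at the points of `H`, and makes `G → G/H` closed and strongly sequential-perfect. So `G/H` has
countable character at `1`, hence is metrizable, and, as an ω-narrow group, separable.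

Conversely, a separable quotient group is ω-narrow, and this lifts to `G` because `H` fits into
any neighbourhood of `1`; a strong q-sequence at `1` translates to every point.
-/

section SubseqLimit

variable {X : Type*} [TopologicalSpace X]

def HasSubseqLimitIn (V : ℕ → Set X) (K : Set X) : Prop :=
  ∀ u : ℕ → X, (∀ n, u n ∈ V n) →
    ∃ c ∈ K, ∃ φ : ℕ → ℕ, StrictMono φ ∧ Tendsto (u ∘ φ) atTop (𝓝 c)

namespace HasSubseqLimitIn

variable {V : ℕ → Set X} {K : Set X}

theorem isSeqCompact (h : HasSubseqLimitIn V K) (hK : ∀ n, K ⊆ V n) : IsSeqCompact K :=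
  fun u hu => h u fun n => hK n (hu n)

theorem exists_subset_of_isOpen (h : HasSubseqLimitIn V K) {O : Set X} (hO : IsOpen O)
    (hKO : K ⊆ O) : ∃ n, V n ⊆ O := by
  by_contra! hV
  choose u huV huO using fun n => not_subset.1 (hV n)
  obtain ⟨c, hc, φ, -, hφ⟩ := h u huV
  exact hO.isClosed_compl.mem_of_tendsto hφ (.of_forall fun k => huO (φ k)) (hKO hc)

theorem hasBasis_nhdsSet (h : HasSubseqLimitIn V K) (hV : ∀ n, IsOpen (V n) ∧ K ⊆ V n) :
    (𝓝ˢ K).HasBasis (fun _ => True) V :=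
  (_root_.hasBasis_nhdsSet K).to_hasBasis
    (fun _ hO => (h.exists_subset_of_isOpen hO.1 hO.2).imp fun _ hn => ⟨trivial, hn⟩)
    fun n _ => ⟨V n, hV n, subset_rfl⟩

theorem isStrongQSequenceAt (h : HasSubseqLimitIn V K) {x : X}
    (hV : ∀ n, IsOpen (V n) ∧ x ∈ V n) : IsStrongQSequenceAt x V :=
  ⟨hV, fun u hu => let ⟨c, _, φ, hφ, hc⟩ := h u hu; ⟨c, φ, hφ, hc⟩⟩

end HasSubseqLimitIn

theorem IsStrongQSequenceAt.mono {x : X} {U V : ℕ → Set X} (hU : IsStrongQSequenceAt x U)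
    (hV : ∀ n, IsOpen (V n) ∧ x ∈ V n) (hVU : ∀ n, V n ⊆ U n) : IsStrongQSequenceAt x V :=
  ⟨hV, fun u hu => hU.2 u fun n => hVU n (hu n)⟩

theorem IsStrongQSequenceAt.image_homeomorph {Y : Type*} [TopologicalSpace Y] (e : X ≃ₜ Y)
    {x : X} {U : ℕ → Set X} (hU : IsStrongQSequenceAt x U) :
    IsStrongQSequenceAt (e x) fun n => e '' U n := by
  refine ⟨fun n => ⟨e.isOpenMap _ (hU.1 n).1, mem_image_of_mem e (hU.1 n).2⟩, fun u hu => ?_⟩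
  obtain ⟨p, φ, hφ, hp⟩ := hU.2 (e.symm ∘ u) fun n => by
    simpa [e.image_eq_preimage_symm] using hu n
  exact ⟨e p, φ, hφ, by simpa [Function.comp_def] using (e.continuous.tendsto p).comp hp⟩

end SubseqLimit

section OmegaNarrowImage

variable {G Q : Type*} [Group G] [TopologicalSpace G] [Group Q] [TopologicalSpace Q]

theorem OmegaNarrow.of_surjective (hG : OmegaNarrow G) (f : G →* Q) (hf : Continuous f) (hs : Function.Surjective f) :
    OmegaNarrow Q := by
  intro V hV hV1
  obtain ⟨A, hA, hAV⟩ := hG (f ⁻¹' V) (hV.preimage hf) (by simpa)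
  refine ⟨f '' A, hA.image f, ?_⟩
  rw [← image_preimage_eq V hs, ← image_mul, hAV, image_univ_of_surjective hs]

end OmegaNarrowImage

section TopologicalGroup

variable {G : Type*} [Group G] [TopologicalSpace G] [IsTopologicalGroup G]

theorem strongQSpace_of_isStrongQSequenceAt_one {U : ℕ → Set G}
    (hU : IsStrongQSequenceAt 1 U) : StrongQSpace G :=
  fun x => ⟨_, by simpa using hU.image_homeomorph (Homeomorph.mulLeft x)⟩

theorem OmegaNarrow.of_separableSpace [SeparableSpace G] : OmegaNarrow G := by
  intro V hV hV1
  obtain ⟨D, hD, hDd⟩ := exists_countable_dense G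
  refine ⟨D, hD, eq_univ_of_forall fun x => ?_⟩
  obtain ⟨d, hdD, hd⟩ := hDd.exists_mem_open (hV.preimage (by fun_prop : Continuous (· ⁻¹ * x)))
    ⟨x, by simpa using hV1⟩
  exact ⟨d, hdD, d⁻¹ * x, hd, mul_inv_cancel_left d x⟩

theorem OmegaNarrow.separableSpace [(𝓝 (1 : G)).IsCountablyGenerated] (hG : OmegaNarrow G) :
    SeparableSpace G := by
  obtain ⟨B, hB⟩ := (𝓝 (1 : G)).exists_antitone_basis
  choose A hA hAB using fun n =>
    hG (interior (B n)) isOpen_interior (mem_interior_iff_mem_nhds.2 (hB.mem n))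
  refine ⟨⋃ n, A n, countable_iUnion hA, dense_iff_inter_open.2 fun O hO ⟨x, hx⟩ => ?_⟩
  have hxO : ∀ᶠ y in 𝓝 1, x * y⁻¹ ∈ O :=
    (by fun_prop : Continuous fun y : G => x * y⁻¹).continuousAt.preimage_mem_nhds
      (by simpa using hO.mem_nhds hx)
  obtain ⟨n, -, hn⟩ := hB.1.eventually_iff.1 hxO
  obtain ⟨a, ha, b, hb, rfl⟩ := hAB n ▸ mem_univ x
  exact ⟨a, by simpa using hn (interior_subset hb), mem_iUnion.2 ⟨n, ha⟩⟩

open Uniformity in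
theorem IsTopologicalGroup.metrizableSpace [T0Space G] [(𝓝 (1 : G)).IsCountablyGenerated] :
    MetrizableSpace G := by
  let := IsTopologicalGroup.rightUniformSpace G
  have : (𝓤 G).IsCountablyGenerated := comap.isCountablyGenerated _ _
  exact UniformSpace.metrizableSpace

end TopologicalGroup

section Subgroup

variable {G : Type*} [Group G] [TopologicalSpace G] [IsTopologicalGroup G]
  {H : Subgroup G} {V : ℕ → Set G}

theorem OmegaNarrow.exists_countable_mul_mul_subgroup_eq_univ [H.Normal]
    (hQ : OmegaNarrow (G ⧸ H)) {S : Set G} (hS : IsOpen S) (hS1 : (1 : G) ∈ S) :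
    ∃ A : Set G, A.Countable ∧ A * S * (H : Set G) = univ := by
  obtain ⟨B, hB, hBS⟩ := hQ _ (QuotientGroup.isOpenMap_coe S hS) ⟨1, hS1, rfl⟩
  refine ⟨Quotient.out '' B, hB.image _, ?_⟩
  have hB' : ((↑) : G → G ⧸ H) '' (Quotient.out '' B) = B := by
    simp [image_image]
  rw [← QuotientGroup.preimage_image_mk_eq_mul, ← QuotientGroup.coe_mk', image_mul,
    QuotientGroup.coe_mk', hB', hBS, preimage_univ]

theorem omegaNarrow_of_separableSpace_quotients (h : ∀ O : Set G, IsOpen O → (1 : G) ∈ O →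
      ∃ H : Subgroup G, H.Normal ∧ (H : Set G) ⊆ O ∧ SeparableSpace (G ⧸ H)) :
    OmegaNarrow G := by
  intro S hS hS1
  obtain ⟨S', hS'o, hS'1, hS'S⟩ := exists_open_nhds_one_mul_subset (hS.mem_nhds hS1)
  obtain ⟨H, _, hHS', _⟩ := h S' hS'o hS'1
  obtain ⟨A, hA, hAS⟩ :=
    (OmegaNarrow.of_separableSpace (G := G ⧸ H)).exists_countable_mul_mul_subgroup_eq_univ
      hS'o hS'1
  refine ⟨A, hA, eq_univ_of_univ_subset (hAS ▸ ?_)⟩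
  rw [mul_assoc]
  exact mul_subset_mul_left ((mul_subset_mul_left hHS').trans hS'S)

theorem QuotientGroup.map_mk_nhdsSet (H : Subgroup G) :
    Filter.map ((↑) : G → G ⧸ H) (𝓝ˢ (H : Set G)) = 𝓝 ((1 : G) : G ⧸ H) := by
  have : ((↑) : G → G ⧸ H) '' H = {((1 : G) : G ⧸ H)} :=
    eq_singleton_iff_unique_mem.2 ⟨⟨1, H.one_mem, rfl⟩,
      fun _ ⟨h, hh, e⟩ => e ▸ QuotientGroup.eq.2 (by simpa using hh)⟩
  rw [QuotientGroup.isOpenMap_coe.map_nhdsSet_eq QuotientGroup.continuous_mk, this,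
    nhdsSet_singleton]

theorem isClosedMap_mk_of_hasSubseqLimitIn (hV : HasSubseqLimitIn V H) (hVn : ∀ n, V n ∈ 𝓝 1)
    (hVH : ∀ n, V n * (H : Set G) ⊆ V n) : IsClosedMap ((↑) : G → G ⧸ H) := by
  intro F hF
  rw [← (QuotientGroup.isQuotientMap_mk H).isClosed_preimage,
    QuotientGroup.preimage_image_mk_eq_mul]
  refine isClosed_of_closure_subset fun g hg => ?_
  have hz : ∀ n, ∃ z ∈ V n, g * z ∈ F := by
    intro n
    rw [mem_closure_iff_frequently, ← map_mul_left_nhds_one, frequently_map] at hg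
    obtain ⟨v, ⟨f, hf, h, hh, hfh⟩, hv⟩ := (hg.and_eventually (hVn n)).exists
    refine ⟨v * h⁻¹, hVH n (mul_mem_mul hv (inv_mem hh)), ?_⟩
    rw [← mul_assoc, ← show f * h = g * v from hfh, mul_inv_cancel_right]
    exact hf
  choose z hzV hzF using hz
  obtain ⟨c, hc, φ, -, hφ⟩ := hV z hzV
  have hgc : g * c ∈ F :=
    hF.mem_of_tendsto (tendsto_const_nhds.mul hφ) (.of_forall fun k => hzF (φ k))
  exact ⟨g * c, hgc, c⁻¹, inv_mem hc, mul_inv_cancel_right g c⟩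

theorem isSeqCompact_preimage_mk_of_hasSubseqLimitIn (hV : HasSubseqLimitIn V H)
    (hVo : ∀ n, IsOpen (V n)) (hV1 : ∀ n, (1 : G) ∈ V n) (hVH : ∀ n, V n * (H : Set G) ⊆ V n)
    {F : Set (G ⧸ H)} (hF : IsSeqCompact F) : IsSeqCompact (((↑) : G → G ⧸ H) ⁻¹' F) := by
  intro u hu
  obtain ⟨q, hq, φ, hφ, hφq⟩ := hF (x := fun n => (u n : G ⧸ H)) hu
  obtain ⟨g, rfl⟩ := QuotientGroup.mk_surjective q
  have hev : ∀ n, ∀ᶠ k in atTop, g⁻¹ * u (φ k) ∈ V n := by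
    intro n
    have hS : IsOpen ((g⁻¹ * ·) ⁻¹' V n) := (hVo n).preimage (by fun_prop)
    filter_upwards [hφq.eventually ((QuotientGroup.isOpenMap_coe _ hS).mem_nhds
      ⟨g, by simpa using hV1 n, rfl⟩)] with k hk
    obtain ⟨s, hs, h, hh, hsh⟩ : u (φ k) ∈ (g⁻¹ * ·) ⁻¹' V n * (H : Set G) := by
      rw [← QuotientGroup.preimage_image_mk_eq_mul]; exact hk
    rw [← show s * h = u (φ k) from hsh, ← mul_assoc]
    exact hVH n (mul_mem_mul hs hh)
  obtain ⟨ψ, hψ, hψV⟩ := extraction_forall_of_eventually hev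
  obtain ⟨c, hc, σ, hσ, hσc⟩ := hV _ hψV
  refine ⟨g * c, show ((g * c : G) : G ⧸ H) ∈ F by rwa [QuotientGroup.mk_mul_of_mem g hc],
    φ ∘ ψ ∘ σ, hφ.comp (hψ.comp hσ), ?_⟩
  simpa [Function.comp_def] using (tendsto_const_nhds (x := g)).mul hσc

theorem HasSubseqLimitIn.mul_subgroup {W : ℕ → Set G} (hW : HasSubseqLimitIn W H)
    (hH : IsSeqCompact (H : Set G)) : HasSubseqLimitIn (fun n => W n * (H : Set G)) H := by
  intro u hu
  choose w hw h hh hwh using fun n => mem_mul.1 (hu n)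
  obtain ⟨p, hp, φ, hφ, hwp⟩ := hW w hw
  obtain ⟨c, hc, ψ, hψ, hhc⟩ := hH fun k => hh (φ k)
  refine ⟨p * c, mul_mem hp hc, φ ∘ ψ, hφ.comp hψ, ?_⟩
  simpa [Function.comp_def, hwh] using (hwp.comp hψ.tendsto_atTop).mul hhc

end Subgroup

structure SymmNhdsChain (G : Type*) [Group G] [TopologicalSpace G] where
  toFun : ℕ → Set G
  isOpen : ∀ n, IsOpen (toFun n)
  one_mem : ∀ n, (1 : G) ∈ toFun n
  inv_eq : ∀ n, (toFun n)⁻¹ = toFun n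
  mul_subset : ∀ n, toFun (n + 1) * toFun (n + 1) ⊆ toFun n

namespace SymmNhdsChain

variable {G : Type*} [Group G] [TopologicalSpace G]

instance : CoeFun (SymmNhdsChain G) fun _ => ℕ → Set G := ⟨toFun⟩

variable (W : SymmNhdsChain G)

def IsInvariant : Prop :=
  ∀ n (x : G), ∃ m, ∀ v ∈ W m, x * v * x⁻¹ ∈ W n

def subgroup : Subgroup G where
  carrier := ⋂ n, W n
  one_mem' := mem_iInter.2 W.one_mem
  mul_mem' ha hb := mem_iInter.2 fun n =>
    W.mul_subset n (mul_mem_mul (mem_iInter.1 ha _) (mem_iInter.1 hb _))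
  inv_mem' ha := mem_iInter.2 fun n => W.inv_eq n ▸ inv_mem_inv.2 (mem_iInter.1 ha n)

theorem subgroup_subset (n : ℕ) : (W.subgroup : Set G) ⊆ W n :=
  iInter_subset _ n

theorem antitone : Antitone W :=
  antitone_nat_of_succ_le fun n x hx => by
    simpa using W.mul_subset n (mul_mem_mul hx (W.one_mem _))

theorem subgroup_normal (hW : W.IsInvariant) : W.subgroup.Normal :=
  ⟨fun h hh x => mem_iInter.2 fun n =>
    let ⟨m, hm⟩ := hW n x; hm h (mem_iInter.1 hh m)⟩

variable [IsTopologicalGroup G]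

theorem closure_succ_subset (n : ℕ) : closure (W (n + 1)) ⊆ W n :=
  (closure_subset_mul_self_of_mem_nhds_one ((W.isOpen _).mem_nhds (W.one_mem _))).trans
    (W.mul_subset n)

theorem isClosed_subgroup : IsClosed (W.subgroup : Set G) :=
  isClosed_of_closure_subset fun _ hx => mem_iInter.2 fun n =>
    W.closure_succ_subset n (closure_mono (W.subgroup_subset _) hx)

theorem hasSubseqLimitIn (hW : IsStrongQSequenceAt 1 W) : HasSubseqLimitIn W W.subgroup := by
  intro u hu
  obtain ⟨p, φ, hφ, hp⟩ := hW.2 u hu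
  refine ⟨p, mem_iInter.2 fun n => W.closure_succ_subset n ?_, φ, hφ, hp⟩
  exact mem_closure_of_tendsto hp <| eventually_atTop.2
    ⟨n + 1, fun k hk => W.antitone (hk.trans hφ.le_apply) (hu (φ k))⟩

end SymmNhdsChain

/-- Stage `n + 1` refines stage `n`, the target `T (n + 1)` and the `k`-th refinement `E _ k` of
stage `j`, where `n` encodes `(j, k)`; so each refinement of each stage is reached later on. -/
def diagonalRec {α : Type*} [Min α] (R : α → α) (E : α → ℕ → α) (T : ℕ → α) : ℕ → α
  | 0 => R (T 0)
  | n + 1 => R (diagonalRec R E T n ⊓ T (n + 1) ⊓ E (diagonalRec R E T n.unpair.1) n.unpair.2)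
decreasing_by
  · exact n.lt_succ_self
  · exact Nat.lt_succ_of_le n.unpair_left_le

section Construction

variable {G : Type*} [Group G] [TopologicalSpace G] [IsTopologicalGroup G]

theorem exists_openNhdsOf_one_inv_eq_mul_subset {U : Set G} (hU : U ∈ 𝓝 1) :
    ∃ V : OpenNhdsOf (1 : G), (V : Set G)⁻¹ = V ∧ (V : Set G) * V ⊆ U := by
  obtain ⟨V, hVo, hV1, hVU⟩ := exists_open_nhds_one_mul_subset hU
  refine ⟨⟨⟨V ∩ V⁻¹, hVo.inter hVo.inv⟩, ⟨hV1, by simpa using hV1⟩⟩, ?_,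
    (mul_subset_mul inter_subset_left inter_subset_left).trans hVU⟩
  show (V ∩ V⁻¹)⁻¹ = V ∩ V⁻¹
  simp [inter_comm]

theorem OmegaNarrow.exists_seq_conj_subset (hG : OmegaNarrow G) {U : Set G} (hU : U ∈ 𝓝 1) :
    ∃ E : ℕ → OpenNhdsOf (1 : G), ∀ x : G, ∃ k, ∀ v ∈ E k, x * v * x⁻¹ ∈ U := by
  have hconj : Tendsto (fun p : G × G => p.1⁻¹ * p.2 * p.1) (𝓝 1 ×ˢ 𝓝 1) (𝓝 1) := by
    rw [← nhds_prod_eq]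
    exact ((by fun_prop : Continuous fun p : G × G => p.1⁻¹ * p.2 * p.1).tendsto' _ _ (by simp))
  obtain ⟨V', hV', hV'U⟩ :=
    eventually_prod_self_iff (r := fun s w => s⁻¹ * w * s ∈ U) |>.1 (hconj.eventually hU)
  obtain ⟨V, hVV', hVo, hV1⟩ := mem_nhds_iff.1 hV'
  obtain ⟨A, hA, hAV⟩ := hG V hVo hV1
  obtain ⟨a, rfl⟩ := hA.exists_eq_range (hAV ▸ univ_nonempty : (A * V).Nonempty).of_mul_left
  refine ⟨fun k => ⟨⟨(fun v => (a k)⁻¹ * v * a k) ⁻¹' V, hVo.preimage (by fun_prop)⟩,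
    by simpa using hV1⟩, fun x => ?_⟩
  -- `x⁻¹ = a k * s` turns `x v x⁻¹` into `s⁻¹ ((a k)⁻¹ v (a k)) s`
  obtain ⟨_, ⟨k, rfl⟩, s, hs, hx⟩ := hAV ▸ mem_univ x⁻¹
  refine ⟨k, fun v hv => ?_⟩
  have hx' : x = s⁻¹ * (a k)⁻¹ := by rw [← mul_inv_rev, show a k * s = x⁻¹ from hx, inv_inv]
  have := hV'U s (hVV' hs) _ (hVV' hv)
  rw [hx']
  simpa [mul_assoc] using this

theorem OmegaNarrow.exists_symmNhdsChain (hG : OmegaNarrow G) (T : ℕ → Set G)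
    (hT : ∀ n, T n ∈ 𝓝 1) : ∃ W : SymmNhdsChain G, (∀ n, W n ⊆ T n) ∧ W.IsInvariant := by
  choose R hRinv hRsq using fun S : OpenNhdsOf (1 : G) =>
    exists_openNhdsOf_one_inv_eq_mul_subset (S.isOpen.mem_nhds S.mem)
  choose E hE using fun S : OpenNhdsOf (1 : G) =>
    hG.exists_seq_conj_subset (S.isOpen.mem_nhds S.mem)
  let T' n : OpenNhdsOf (1 : G) :=
    ⟨⟨interior (T n), isOpen_interior⟩, mem_interior_iff_mem_nhds.2 (hT n)⟩
  let w := diagonalRec R E T'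
  have hR_le S : R S ≤ S := fun x hx => by simpa using hRsq S (mul_mem_mul hx (R S).mem)
  have hw_succ n : w (n + 1) = R (w n ⊓ T' (n + 1) ⊓ E (w n.unpair.1) n.unpair.2) := by
    simp only [w]; rw [diagonalRec]
  have hw_le n : w (n + 1) ≤ w n ⊓ T' (n + 1) ⊓ E (w n.unpair.1) n.unpair.2 :=
    hw_succ n ▸ hR_le _
  refine ⟨⟨fun n => w n, fun n => (w n).isOpen, fun n => (w n).mem, fun n => ?_, fun n => ?_⟩,
    fun n => ?_, fun n x => ?_⟩
  · cases n with
    | zero => simp only [w]; rw [diagonalRec]; exact hRinv _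
    | succ n => rw [hw_succ]; exact hRinv _
  · rw [hw_succ]
    exact (hRsq _).trans fun x hx => hx.1.1
  · refine (show (w n : Set G) ⊆ T' n from ?_).trans interior_subset
    cases n with
    | zero => simp only [w]; rw [diagonalRec]; exact hR_le _
    | succ n => exact (hw_le n).trans (inf_le_left.trans inf_le_right)
  · obtain ⟨k, hk⟩ := hE (w n) x
    refine ⟨Nat.pair n k + 1, fun v hv => hk v ?_⟩
    have := (hw_le (Nat.pair n k) hv).2
    rwa [Nat.unpair_pair] at this

theorem OmegaNarrow.exists_normal_subgroup_hasSubseqLimitIn (hN : OmegaNarrow G) {U : ℕ → Set G}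
    (hU : IsStrongQSequenceAt 1 U) {O : Set G} (hO : O ∈ 𝓝 1) :
    ∃ (H : Subgroup G) (V : ℕ → Set G), H.Normal ∧ IsClosed (H : Set G) ∧ (H : Set G) ⊆ O ∧
      HasSubseqLimitIn V H ∧ (∀ n, IsOpen (V n) ∧ (H : Set G) ⊆ V n) ∧
      ∀ n, V n * (H : Set G) ⊆ V n := by
  obtain ⟨W, hWU, hWinv⟩ := hN.exists_symmNhdsChain (fun n => O ∩ U n) fun n =>
    inter_mem hO ((hU.1 n).1.mem_nhds (hU.1 n).2)
  let H := W.subgroup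
  have hWH : HasSubseqLimitIn W H := W.hasSubseqLimitIn <|
    hU.mono (fun n => ⟨W.isOpen n, W.one_mem n⟩) fun n => (hWU n).trans inter_subset_right
  refine ⟨H, fun n => W n * (H : Set G), W.subgroup_normal hWinv, W.isClosed_subgroup,
    fun x hx => (hWU 0 (W.subgroup_subset 0 hx)).1,
    hWH.mul_subgroup (hWH.isSeqCompact W.subgroup_subset),
    fun n => ⟨(W.isOpen n).mul_right, fun h hh => ⟨1, W.one_mem n, h, hh, one_mul h⟩⟩,
    fun n => ?_⟩
  rw [mul_assoc]
  exact mul_subset_mul_left H.toSubmonoid.coe_mul_self_eq.subset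

end Construction

theorem omegaNarrow_and_strongQSpace_iff_general (G : Type*) [Group G] [TopologicalSpace G] [IsTopologicalGroup G] :
    (OmegaNarrow G ∧ StrongQSpace G) ↔
      ∀ O : Set G, IsOpen O → (1 : G) ∈ O →
        ∃ (H : Subgroup G) (V : ℕ → Set G), H.Normal ∧ IsClosed (H : Set G) ∧
          IsSeqCompact (H : Set G) ∧
          (∀ n, IsOpen (V n) ∧ (H : Set G) ⊆ V n) ∧
          (∀ W : Set G, IsOpen W → (H : Set G) ⊆ W → ∃ n, V n ⊆ W) ∧
          (H : Set G) ⊆ O ∧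
          (∀ y ∈ (H : Set G), IsStrongQSequenceAt y V) ∧
          IsClosedMap (QuotientGroup.mk : G → G ⧸ H) ∧
          (∀ F : Set (G ⧸ H), IsSeqCompact F →
            IsSeqCompact ((QuotientGroup.mk : G → G ⧸ H) ⁻¹' F)) ∧
          SeparableSpace (G ⧸ H) ∧ MetrizableSpace (G ⧸ H) := by
  constructor
  · rintro ⟨hN, hQ⟩ O hO hO1
    obtain ⟨U, hU⟩ := hQ 1
    obtain ⟨H, V, hHn, hHc, hHO, hV, hVo, hVH⟩ :=
      hN.exists_normal_subgroup_hasSubseqLimitIn hU (hO.mem_nhds hO1)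
    have hV1 n : (1 : G) ∈ V n := (hVo n).2 H.one_mem
    have := (hV.hasBasis_nhdsSet hVo).isCountablyGenerated
    have : (𝓝 (1 : G ⧸ H)).IsCountablyGenerated :=
      QuotientGroup.map_mk_nhdsSet H ▸ map.isCountablyGenerated _ _
    exact ⟨H, V, hHn, hHc, hV.isSeqCompact fun n => (hVo n).2, hVo,
      fun _ => hV.exists_subset_of_isOpen, hHO,
      fun y hy => hV.isStrongQSequenceAt fun n => ⟨(hVo n).1, (hVo n).2 hy⟩,
      isClosedMap_mk_of_hasSubseqLimitIn hV (fun n => (hVo n).1.mem_nhds (hV1 n)) hVH,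
      fun _ => isSeqCompact_preimage_mk_of_hasSubseqLimitIn hV (fun n => (hVo n).1) hV1 hVH,
      (hN.of_surjective _ QuotientGroup.continuous_mk
        (QuotientGroup.mk'_surjective H)).separableSpace,
      IsTopologicalGroup.metrizableSpace⟩
  · intro h
    refine ⟨omegaNarrow_of_separableSpace_quotients fun O hO hO1 => ?_, ?_⟩
    · obtain ⟨H, -, hN, -, -, -, -, hHO, -, -, -, hsep, -⟩ := h O hO hO1
      exact ⟨H, hN, hHO, hsep⟩
    · obtain ⟨H, V, -, -, -, -, -, -, hq, -⟩ := h univ isOpen_univ trivial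
      exact strongQSpace_of_isStrongQSequenceAt_one (hq 1 H.one_mem)

theorem omegaNarrow_and_strongQSpace_iff (G : Type*) [Group G] [TopologicalSpace G] [IsTopologicalGroup G] [T2Space G] :
    (OmegaNarrow G ∧ StrongQSpace G) ↔
      ∀ O : Set G, IsOpen O → (1 : G) ∈ O →
        ∃ (H : Subgroup G) (V : ℕ → Set G), H.Normal ∧ IsClosed (H : Set G) ∧
          IsSeqCompact (H : Set G) ∧
          (∀ n, IsOpen (V n) ∧ (H : Set G) ⊆ V n) ∧
          (∀ W : Set G, IsOpen W → (H : Set G) ⊆ W → ∃ n, V n ⊆ W) ∧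
          (H : Set G) ⊆ O ∧
          (∀ y ∈ (H : Set G), IsStrongQSequenceAt y V) ∧
          IsClosedMap (QuotientGroup.mk : G → G ⧸ H) ∧
          (∀ F : Set (G ⧸ H), IsSeqCompact F →
            IsSeqCompact ((QuotientGroup.mk : G → G ⧸ H) ⁻¹' F)) ∧
          SeparableSpace (G ⧸ H) ∧ MetrizableSpace (G ⧸ H) :=
  omegaNarrow_and_strongQSpace_iff_general G
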